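/- arXiv:2012.04376 — 3 statements merged into one kernel-verified Lean document; each statement's English description precedes it below -/
import Mathlib

section
/- Let (A,<_A,f_A) be a partial automorphism of a finite poset and let s ∈ dom(f_A) with s <_A f_A(s). Then there exist a partial automorphism (B,<_B,f_B) of a finite poset extending (A,<_A,f_A), a natural number n, and elements a, b ∈ B with a <_B b, such that f_B^n(s) = a and f_B is free in (a,b). -/
/-- `F` (a partial map identified with its graph) is a partial automorphism of the
strict order `lt`: it is functional, injective, and for all `a, a'` in its domain,
`a < a' ↔ F(a) < F(a')`. -/
def IsPAGraph {α : Type} (lt : α → α → Prop) (F : α → α → Prop) : Prop :=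
  (∀ a b b', F a b → F a b' → b = b') ∧
  (∀ a a' b, F a b → F a' b → a = a') ∧
  (∀ a a' b b', F a b → F a' b' → (lt a a' ↔ lt b b'))

/-- A partial automorphism of a finite poset: a finite carrier, a strict partial
order `lt`, and a partial automorphism `f` (given by its graph). -/
structure PA where
  carrier : Type
  fin : Fintype carrier
  lt : carrier → carrier → Prop
  irrefl : ∀ a, ¬ lt a a
  trans : ∀ a b c, lt a b → lt b c → lt a c
  f : carrier → carrier → Prop
  hf : IsPAGraph lt f

/-- An embedding (extension, up to identification) of partial automorphisms:
an order-embedding of the underlying posets carrying the graph of `f` into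
the graph of `f`. -/
structure PA.Emb (X Y : PA) where
  toFun : X.carrier → Y.carrier
  inj : Function.Injective toFun
  ord : ∀ a a', X.lt a a' ↔ Y.lt (toFun a) (toFun a')
  map_f : ∀ a b, X.f a b → Y.f (toFun a) (toFun b)

/-- The graph of the `n`-th iterate of the partial map with graph `F`:
`iterGraph F n x y` means `F^n(x)` is defined and equals `y`. -/
def iterGraph {α : Type} (F : α → α → Prop) : ℕ → α → α → Prop
  | 0, x, y => x = y
  | (n + 1), x, y => ∃ z, iterGraph F n x z ∧ F z y

/-- `f_B` is free in `(a, b)`, where `a <_B b`: whenever `(B,<_B)` is extended to a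
finite poset `(C,<_C)` (via an order-embedding `e`) and `c₁ <_C ⋯ <_C c_ℓ` is a chain
in `C` with `e a <_C c₁` and `c_ℓ <_C e b`, the partial map
`f_B ∪ {(a,c₁),(c₁,c₂),…,(c_{ℓ-1},c_ℓ)}` is a partial automorphism of `(C,<_C)`. -/
def FreeIn (B : PA) (a b : B.carrier) : Prop :=
  ∀ (C : Type) [Fintype C] (ltC : C → C → Prop),
    (∀ x, ¬ ltC x x) → (∀ x y z, ltC x y → ltC y z → ltC x z) →
    ∀ e : B.carrier → C, Function.Injective e →
      (∀ u v, B.lt u v ↔ ltC (e u) (e v)) →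
    ∀ (ℓ : ℕ), 1 ≤ ℓ → ∀ c : ℕ → C,
      ltC (e a) (c 1) →
      (∀ i, 1 ≤ i → i < ℓ → ltC (c i) (c (i + 1))) →
      ltC (c ℓ) (e b) →
      IsPAGraph ltC (fun x y =>
        (∃ u v, B.f u v ∧ x = e u ∧ y = e v) ∨
        (x = e a ∧ y = c 1) ∨
        (∃ i, 1 ≤ i ∧ i < ℓ ∧ x = c i ∧ y = c (i + 1)))

/-!
The orbit `s < f s < f² s < ⋯` is increasing, so in a finite poset it ends at a point
`a0 = f o` outside the domain of `f`, with `o < a0`. Continue it by a new chain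
`a0 ↦ 0 ↦ 1 ↦ ⋯ ↦ K`, topped by one more point `K + 1`, and put the new point `j` above exactly
the old points forced below it and below exactly those forced above it. The forced sets grow,
resp. shrink, with `j`, so they stabilise; from then on no old point distinguishes `a = K` from
`b = K + 1`, and `f` respects the gap between them. A chain inserted into that gap therefore
looks to every old point like `a` or `b`, which keeps the extended map order-preserving.
-/

open Function

instance (A : PA) : Fintype A.carrier := A.fin

instance (A : PA) : IsStrictOrder A.carrier A.lt where
  irrefl := A.irrefl
  trans := A.trans

section Graphs

variable {α β : Type} {lt : α → α → Prop} {lt' : β → β → Prop} {F G : α → α → Prop}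

theorem IsPAGraph.swap (hF : IsPAGraph lt F) : IsPAGraph (swap lt) F :=
  ⟨hF.1, hF.2.1, fun _ _ _ _ h h' => hF.2.2 _ _ _ _ h' h⟩

theorem IsPAGraph.map (hF : IsPAGraph lt F) {e : α → β} (he : Injective e)
    (hlt : ∀ u v, lt u v ↔ lt' (e u) (e v)) : IsPAGraph lt' (Relation.Map F e e) := by
  refine ⟨?_, ?_, ?_⟩
  · rintro _ _ _ ⟨u, v, huv, rfl, rfl⟩ ⟨u', v', huv', hu, rfl⟩
    rw [hF.1 u v v' huv (he hu ▸ huv')]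
  · rintro _ _ _ ⟨u, v, huv, rfl, rfl⟩ ⟨u', v', huv', rfl, hv⟩
    rw [hF.2.1 u u' v huv (he hv ▸ huv')]
  · rintro _ _ _ _ ⟨u, v, huv, rfl, rfl⟩ ⟨u', v', huv', rfl, rfl⟩
    rw [← hlt, ← hlt]
    exact hF.2.2 u u' v v' huv huv'

theorem IsPAGraph.sup (hF : IsPAGraph lt F) (hG : IsPAGraph lt G)
    (hFG : ∀ u v x y, F u v → G x y →
      u ≠ x ∧ v ≠ y ∧ (lt u x ↔ lt v y) ∧ (lt x u ↔ lt y v)) :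
    IsPAGraph lt (fun x y => F x y ∨ G x y) := by
  refine ⟨?_, ?_, ?_⟩
  · rintro x y y' (h | h) (h' | h')
    exacts [hF.1 _ _ _ h h', ((hFG _ _ _ _ h h').1 rfl).elim,
      ((hFG _ _ _ _ h' h).1 rfl).elim, hG.1 _ _ _ h h']
  · rintro x x' y (h | h) (h' | h')
    exacts [hF.2.1 _ _ _ h h', ((hFG _ _ _ _ h h').2.1 rfl).elim,
      ((hFG _ _ _ _ h' h).2.1 rfl).elim, hG.2.1 _ _ _ h h']
  · rintro x x' y y' (h | h) (h' | h')
    exacts [hF.2.2 _ _ _ _ h h', (hFG _ _ _ _ h h').2.2.1, (hFG _ _ _ _ h' h).2.2.2,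
      hG.2.2 _ _ _ _ h h']

end Graphs

section Iterates

variable {α β : Type} {F : α → α → Prop}

theorem iterGraph_map {G : β → β → Prop} {e : α → β} (hFG : ∀ u v, F u v → G (e u) (e v))
    {n : ℕ} {x y : α} (h : iterGraph F n x y) : iterGraph G n (e x) (e y) := by
  induction n generalizing y with
  | zero => exact congrArg e h
  | succ n ih =>
    obtain ⟨z, hz, hzy⟩ := h
    exact ⟨e z, ih hz, hFG z y hzy⟩

theorem iterGraph_add {m n : ℕ} {x y z : α} (hxy : iterGraph F m x y) (hyz : iterGraph F n y z) :
    iterGraph F (m + n) x z := by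
  induction n generalizing z with
  | zero => exact hyz ▸ hxy
  | succ n ih =>
    obtain ⟨w, hw, hwz⟩ := hyz
    exact ⟨w, ih hw, hwz⟩

theorem iterGraph_functional (hF : ∀ a b b', F a b → F a b' → b = b') {n : ℕ} {x y y' : α}
    (h : iterGraph F n x y) (h' : iterGraph F n x y') : y = y' := by
  induction n generalizing y y' with
  | zero => exact h.symm.trans h'
  | succ n ih =>
    obtain ⟨z, hz, hzy⟩ := h
    obtain ⟨z', hz', hzy'⟩ := h'
    exact hF z y y' hzy (ih hz hz' ▸ hzy')

variable {lt : α → α → Prop} {s t : α}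

theorem rel_of_iterGraph (hF : IsPAGraph lt F) (hst : F s t) (hlt : lt s t) {n : ℕ} {y z : α}
    (hy : iterGraph F n s y) (hyz : F y z) : lt y z := by
  induction n generalizing y z with
  | zero => exact hy ▸ hF.1 s t z hst (hy ▸ hyz) ▸ hlt
  | succ n ih =>
    obtain ⟨w, hw, hwy⟩ := hy
    exact (hF.2.2 w y y z hwy hyz).1 (ih hw hwy)

theorem exists_iterGraph_not_mem_dom [Finite α] [IsStrictOrder α lt] (hF : IsPAGraph lt F)
    (hst : F s t) (hlt : lt s t) :
    ∃ n a0, iterGraph F n s a0 ∧ (∃ o, F o a0 ∧ lt o a0) ∧ ∀ y, ¬ F a0 y := by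
  have hbounded : ¬ ∀ m, ∃ y, iterGraph F m s y := by
    intro hall
    choose g hg using hall
    have hstep : ∀ m, lt (g m) (g (m + 1)) := fun m => by
      obtain ⟨z, hz, hzg⟩ := hg (m + 1)
      exact iterGraph_functional hF.1 hz (hg m) ▸ rel_of_iterGraph hF hst hlt hz hzg
    refine not_injective_infinite_finite g fun i j hij => ?_
    by_contra hne
    rcases Nat.lt_or_gt_of_ne hne with h | h <;>
      exact irrefl _ (hij ▸ Nat.rel_of_forall_rel_succ_of_lt lt hstep h)
  obtain ⟨m, ⟨a0, ha0⟩, hlast⟩ :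
      ∃ m, (∃ y, iterGraph F (m + 1) s y) ∧ ∀ y, ¬ iterGraph F (m + 2) s y := by
    by_contra! hgrow
    refine hbounded fun m => ?_
    induction m with
    | zero => exact ⟨s, rfl⟩
    | succ m ih =>
      cases m with
      | zero => exact ⟨t, s, rfl, hst⟩
      | succ m => exact hgrow m ih
  obtain ⟨o, ho, hoa0⟩ := ha0
  exact ⟨m + 1, a0, ⟨o, ho, hoa0⟩, ⟨o, hoa0, rel_of_iterGraph hF hst hlt ho hoa0⟩,
    fun y hy => hlast y ⟨a0, ⟨o, ho, hoa0⟩, hy⟩⟩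

end Iterates

section Chains

variable {α : Type} {lt : α → α → Prop} {d : ℕ → α} {n : ℕ}

def IsRelChain (lt : α → α → Prop) (d : ℕ → α) (n : ℕ) : Prop :=
  ∀ i < n, lt (d i) (d (i + 1))

def chainGraph (d : ℕ → α) (n : ℕ) (x y : α) : Prop :=
  ∃ i < n, x = d i ∧ y = d (i + 1)

namespace IsRelChain

theorem rel [IsTrans α lt] (hd : IsRelChain lt d n) {i j : ℕ} (hij : i < j) (hjn : j ≤ n) :
    lt (d i) (d j) := by
  induction j, hij using Nat.le_induction with
  | base => exact hd i hjn
  | succ j _ ih => exact _root_.trans (ih (by omega)) (hd j hjn)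

variable [IsStrictOrder α lt]

theorem rel_iff (hd : IsRelChain lt d n) {i j : ℕ} (hin : i ≤ n) (hjn : j ≤ n) :
    lt (d i) (d j) ↔ i < j := by
  refine ⟨fun h => ?_, fun h => hd.rel h hjn⟩
  by_contra! hji
  rcases hji.lt_or_eq with hji | rfl
  exacts [asymm h (hd.rel hji hin), irrefl _ h]

theorem eq_iff (hd : IsRelChain lt d n) {i j : ℕ} (hin : i ≤ n) (hjn : j ≤ n) :
    d i = d j ↔ i = j := by
  refine ⟨fun h => ?_, congrArg d⟩
  by_contra hne
  rcases Nat.lt_or_gt_of_ne hne with hij | hij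
  exacts [irrefl _ (h ▸ hd.rel hij hjn), irrefl _ (h ▸ hd.rel hij hin)]

theorem isPAGraph_chainGraph (hd : IsRelChain lt d n) : IsPAGraph lt (chainGraph d n) := by
  refine ⟨?_, ?_, ?_⟩
  · rintro _ _ _ ⟨i, hi, rfl, rfl⟩ ⟨j, hj, hij, rfl⟩
    rw [(hd.eq_iff hi.le hj.le).1 hij]
  · rintro _ _ _ ⟨i, hi, rfl, rfl⟩ ⟨j, hj, rfl, hij⟩
    rw [← Nat.succ_inj.1 ((hd.eq_iff hi hj).1 hij)]
  · rintro _ _ _ _ ⟨i, hi, rfl, rfl⟩ ⟨j, hj, rfl, rfl⟩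
    rw [hd.rel_iff hi.le hj.le, hd.rel_iff hi hj]
    omega

end IsRelChain

theorem iterGraph_chainGraph {i : ℕ} (hin : i ≤ n) : iterGraph (chainGraph d n) i (d 0) (d i) := by
  induction i with
  | zero => rfl
  | succ i ih => exact ⟨d i, ih (by omega), i, hin, rfl, rfl⟩

end Chains

section FreeGap

variable {β γ : Type} {lt : β → β → Prop} {f : β → β → Prop} {a b : β}

/-- A gap `a < b` that no element of `β` can tell apart from a single point, and that `f`
respects; any chain inserted into it may continue the orbit of `a`. -/
structure IsFreeGap (lt f : β → β → Prop) (a b : β) : Prop where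
  not_mem_dom : ∀ y, ¬ f a y
  lt_right_iff : ∀ x, lt x b ↔ lt x a ∨ x = a
  left_lt_iff : ∀ x, lt a x ↔ lt b x ∨ b = x
  lt_left_iff_lt_right : ∀ u v, f u v → (lt u a ↔ lt v b)
  left_lt_iff_left_lt : ∀ u v, f u v → (lt a u ↔ lt a v)

namespace IsFreeGap

variable {lt' : γ → γ → Prop} [IsStrictOrder γ lt'] {e : β → γ} {z : γ}

theorem lt_between_iff (hgap : IsFreeGap lt f a b) (he : ∀ u v, lt u v ↔ lt' (e u) (e v))
    (haz : lt' (e a) z) (hzb : lt' z (e b)) (w : β) : lt' (e w) z ↔ lt w b := by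
  refine ⟨fun h => (he w b).2 (_root_.trans h hzb), fun h => ?_⟩
  rcases (hgap.lt_right_iff w).1 h with h | rfl
  exacts [_root_.trans ((he w a).1 h) haz, haz]

theorem between_lt_iff (hgap : IsFreeGap lt f a b) (he : ∀ u v, lt u v ↔ lt' (e u) (e v))
    (haz : lt' (e a) z) (hzb : lt' z (e b)) (w : β) : lt' z (e w) ↔ lt a w := by
  refine ⟨fun h => (he a w).2 (_root_.trans haz h), fun h => ?_⟩
  rcases (hgap.left_lt_iff w).1 h with h | rfl
  exacts [_root_.trans hzb ((he b w).1 h), hzb]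

theorem ne_between (hgap : IsFreeGap lt f a b) (he : ∀ u v, lt u v ↔ lt' (e u) (e v))
    (haz : lt' (e a) z) (hzb : lt' z (e b)) (w : β) : e w ≠ z := by
  rintro rfl
  rcases (hgap.left_lt_iff w).1 ((he a w).2 haz) with h | rfl
  exacts [irrefl _ (_root_.trans hzb ((he b w).1 h)), irrefl _ hzb]

theorem compat_of_mem_dom (hgap : IsFreeGap lt f a b) (he : ∀ u v, lt u v ↔ lt' (e u) (e v))
    (hinj : Injective e) {u v : β} (huv : f u v) (hz : z = e a ∨ lt' (e a) z ∧ lt' z (e b)) :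
    e u ≠ z ∧ (lt' (e u) z ↔ lt u a) ∧ (lt' z (e u) ↔ lt a u) := by
  rcases hz with rfl | ⟨haz, hzb⟩
  · exact ⟨fun h => hgap.not_mem_dom v (hinj h ▸ huv), (he u a).symm, (he a u).symm⟩
  have hua : u ≠ a := by
    rintro rfl
    exact hgap.not_mem_dom v huv
  refine ⟨hgap.ne_between he haz hzb u, ?_, hgap.between_lt_iff he haz hzb u⟩
  rw [hgap.lt_between_iff he haz hzb, hgap.lt_right_iff, or_iff_left hua]

theorem isPAGraph_sup_chainGraph (hgap : IsFreeGap lt f a b) (hf : IsPAGraph lt f)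
    (hinj : Injective e) (he : ∀ u v, lt u v ↔ lt' (e u) (e v)) {d : ℕ → γ} {n : ℕ}
    (hd : IsRelChain lt' d (n + 1)) (hd0 : d 0 = e a) (hdn : d (n + 1) = e b) :
    IsPAGraph lt' (fun x y => Relation.Map f e e x y ∨ chainGraph d n x y) := by
  have hbetween : ∀ i, 0 < i → i ≤ n → lt' (e a) (d i) ∧ lt' (d i) (e b) := fun i h0 hi =>
    ⟨hd0 ▸ hd.rel h0 (by omega), hdn ▸ hd.rel (by omega) le_rfl⟩
  refine (hf.map hinj he).sup (IsRelChain.isPAGraph_chainGraph fun i hi => hd i (by omega)) ?_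
  rintro _ _ _ _ ⟨u, v, huv, rfl, rfl⟩ ⟨i, hi, rfl, rfl⟩
  have hdi : d i = e a ∨ lt' (e a) (d i) ∧ lt' (d i) (e b) := by
    rcases Nat.eq_zero_or_pos i with rfl | h0
    exacts [Or.inl hd0, Or.inr (hbetween i h0 hi.le)]
  obtain ⟨hne, hlt, hgt⟩ := hgap.compat_of_mem_dom he hinj huv hdi
  obtain ⟨haz, hzb⟩ := hbetween (i + 1) (by omega) hi
  refine ⟨hne, hgap.ne_between he haz hzb v, ?_, ?_⟩
  · rw [hlt, hgap.lt_between_iff he haz hzb, hgap.lt_left_iff_lt_right u v huv]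
  · rw [hgt, hgap.between_lt_iff he haz hzb, hgap.left_lt_iff_left_lt u v huv]

end IsFreeGap

theorem IsFreeGap.freeIn {B : PA} {a b : B.carrier} (hgap : IsFreeGap B.lt B.f a b) :
    FreeIn B a b := by
  intro C _ ltC irr tr e hinj he ℓ hℓ c hac hc hcb
  have : IsStrictOrder C ltC := { irrefl := irr, trans := tr }
  let d : ℕ → C := fun i => if i = 0 then e a else if i ≤ ℓ then c i else e b
  have hdc : ∀ i, 0 < i → i ≤ ℓ → d i = c i := fun i h0 hi => by simp [d, h0.ne', hi]
  have hd : IsRelChain ltC d (ℓ + 1) := by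
    intro i hi
    rcases Nat.eq_zero_or_pos i with rfl | h0
    · simpa [hdc 1 one_pos hℓ, d] using hac
    rcases (Nat.lt_succ_iff.1 hi).lt_or_eq with hiℓ | rfl
    · rw [hdc i h0 hiℓ.le, hdc (i + 1) (by omega) hiℓ]
      exact hc i h0 hiℓ
    · simpa [hdc i h0 le_rfl, d] using hcb
  convert hgap.isPAGraph_sup_chainGraph B.hf hinj he hd rfl (by simp [d]) using 3 with x y
  refine or_congr ⟨fun ⟨u, v, h, hx, hy⟩ => ⟨u, v, h, hx.symm, hy.symm⟩,
    fun ⟨u, v, h, hx, hy⟩ => ⟨u, v, h, hx.symm, hy.symm⟩⟩ ⟨?_, ?_⟩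
  · rintro (⟨rfl, rfl⟩ | ⟨i, hi, hiℓ, rfl, rfl⟩)
    · exact ⟨0, hℓ, rfl, (hdc 1 one_pos hℓ).symm⟩
    · exact ⟨i, hiℓ, (hdc i hi hiℓ.le).symm, (hdc (i + 1) (by omega) hiℓ).symm⟩
  · rintro ⟨_ | i, hi, rfl, rfl⟩
    · exact Or.inl ⟨rfl, hdc 1 one_pos hℓ⟩
    · exact Or.inr ⟨i + 1, by omega, hi, hdc (i + 1) (by omega) hi.le, hdc (i + 2) (by omega) hi⟩

end FreeGap

section Forced

variable {α : Type} {lt f : α → α → Prop} {a0 o : α}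

/-- If the orbit of `a0` were continued by new points `a₀ = a0, a₁, a₂, …` with `f aₘ = aₘ₊₁`,
then `forcedBelow lt f a0 m` is the set of points of `α` that are forced below `aₘ`: those below
`a0`, and for `m > 0` those below `f u` for some `u` forced below `aₘ₋₁`. -/
def forcedBelow (lt f : α → α → Prop) (a0 : α) : ℕ → Set α
  | 0 => {x | lt x a0}
  | m + 1 => {x | ∃ u ∈ forcedBelow lt f a0 m, ∃ v, f u v ∧ (lt x v ∨ x = v)}

def forcedAbove (lt f : α → α → Prop) (a0 : α) : ℕ → Set α :=
  forcedBelow (swap lt) f a0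

theorem forcedBelow_lower [IsTrans α lt] {m : ℕ} {x y : α} (hxy : lt x y)
    (hy : y ∈ forcedBelow lt f a0 m) :
    x ∈ forcedBelow lt f a0 m := by
  cases m with
  | zero => exact _root_.trans hxy hy
  | succ m =>
    obtain ⟨u, hu, v, huv, hyv⟩ := hy
    exact ⟨u, hu, v, huv, Or.inl (hyv.elim (_root_.trans hxy) (· ▸ hxy))⟩

theorem forcedBelow_succ_iff [IsTrans α lt] (hf : IsPAGraph lt f) {m : ℕ} {u v : α} (huv : f u v) :
    v ∈ forcedBelow lt f a0 (m + 1) ↔ u ∈ forcedBelow lt f a0 m := by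
  refine ⟨?_, fun hu => ⟨u, hu, v, huv, Or.inr rfl⟩⟩
  rintro ⟨u', hu', v', huv', hvv' | rfl⟩
  · exact forcedBelow_lower ((hf.2.2 u u' v v' huv huv').2 hvv') hu'
  · exact hf.2.1 u u' v huv huv' ▸ hu'

theorem forcedAbove_upper [IsTrans α lt] {m : ℕ} {x y : α} (hxy : lt x y)
    (hx : x ∈ forcedAbove lt f a0 m) :
    y ∈ forcedAbove lt f a0 m :=
  forcedBelow_lower (lt := swap lt) hxy hx

theorem forcedAbove_succ_iff [IsTrans α lt] (hf : IsPAGraph lt f) {m : ℕ} {u v : α} (huv : f u v) :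
    v ∈ forcedAbove lt f a0 (m + 1) ↔ u ∈ forcedAbove lt f a0 m :=
  forcedBelow_succ_iff hf.swap huv

theorem forcedBelow_monotone (ho : f o a0) (hoa : lt o a0) : Monotone (forcedBelow lt f a0) := by
  refine monotone_nat_of_le_succ fun m => ?_
  induction m with
  | zero => exact fun x hx => ⟨o, hoa, a0, ho, Or.inl hx⟩
  | succ m ih => exact fun x ⟨u, hu, v, huv, hxv⟩ => ⟨u, ih hu, v, huv, hxv⟩

theorem forcedAbove_antitone [IsTrans α lt] (hf : IsPAGraph lt f) (ho : f o a0) (hoa : lt o a0) :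
    Antitone (forcedAbove lt f a0) := by
  refine antitone_nat_of_succ_le fun m => ?_
  induction m with
  | zero =>
    rintro x ⟨u, hu, v, huv, hvx⟩
    have ha0v : lt a0 v := (hf.2.2 o u a0 v ho huv).1 (_root_.trans hoa hu)
    exact hvx.elim (_root_.trans ha0v) (· ▸ ha0v)
  | succ m ih => exact fun x ⟨u, hu, v, huv, hxv⟩ => ⟨u, ih hu, v, huv, hxv⟩

theorem mem_forcedBelow_succ (ho : f o a0) (hoa : lt o a0) (m : ℕ) :
    a0 ∈ forcedBelow lt f a0 (m + 1) :=
  forcedBelow_monotone ho hoa (Nat.le_add_left 1 m) ⟨o, hoa, a0, ho, Or.inr rfl⟩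

theorem rel_of_mem_forcedBelow_of_mem_forcedAbove [IsTrans α lt] (hf : IsPAGraph lt f) {m : ℕ}
    {x y : α} (hx : x ∈ forcedBelow lt f a0 m) (hy : y ∈ forcedAbove lt f a0 m) : lt x y := by
  induction m generalizing x y with
  | zero => exact _root_.trans hx hy
  | succ m ih =>
    obtain ⟨u, hu, v, huv, hxv⟩ := hx
    obtain ⟨u', hu', v', huv', hyv'⟩ := hy
    have hvv' : lt v v' := (hf.2.2 u u' v v' huv huv').1 (ih hu hu')
    have hxv' : lt x v' := hxv.elim (_root_.trans · hvv') (· ▸ hvv')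
    exact hyv'.elim (_root_.trans hxv') (· ▸ hxv')

theorem exists_forced_stable [Finite α] [IsTrans α lt] (hf : IsPAGraph lt f) (ho : f o a0)
    (hoa : lt o a0) :
    ∃ K, forcedBelow lt f a0 (K + 1) = forcedBelow lt f a0 (K + 2) ∧
      forcedAbove lt f a0 (K + 1) = forcedAbove lt f a0 (K + 2) := by
  obtain ⟨N, hN⟩ := WellFoundedGT.monotone_chain_condition ⟨_, forcedBelow_monotone ho hoa⟩
  obtain ⟨N', hN'⟩ := WellFoundedLT.antitone_chain_condition (forcedAbove_antitone hf ho hoa)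
  exact ⟨N + N', (hN (N + N' + 1) (by omega)).symm.trans (hN (N + N' + 2) (by omega)),
    (hN' (N + N' + 1) (by omega)).symm.trans (hN' (N + N' + 2) (by omega))⟩

end Forced

section Extension

variable {α : Type} {lt f : α → α → Prop} {a0 o : α} {K : ℕ}

/-- `α` extended by a chain `0 < 1 < ⋯ < K + 1` whose point `j` plays the role of the
`(j + 1)`-st point after `a0` in the continued orbit of `a0`. -/
def extLt (lt f : α → α → Prop) (a0 : α) (K : ℕ) : α ⊕ Fin (K + 2) → α ⊕ Fin (K + 2) → Prop
  | .inl x, .inl y => lt x y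
  | .inl x, .inr j => x ∈ forcedBelow lt f a0 (j + 1)
  | .inr i, .inl y => y ∈ forcedAbove lt f a0 (i + 1)
  | .inr i, .inr j => i < j

def extChain (a0 : α) (K : ℕ) : ℕ → α ⊕ Fin (K + 2)
  | 0 => .inl a0
  | i + 1 => .inr (Fin.ofNat (K + 2) i)

def extGraph (f : α → α → Prop) (a0 : α) (K : ℕ) (x y : α ⊕ Fin (K + 2)) : Prop :=
  Relation.Map f Sum.inl Sum.inl x y ∨ chainGraph (extChain a0 K) (K + 1) x y

theorem extChain_val_succ (j : Fin (K + 2)) : extChain a0 K (j + 1) = .inr j :=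
  congrArg Sum.inr (Fin.ofNat_val_eq_self j)

theorem inl_ne_extChain_succ (w : α) (i : ℕ) : Sum.inl w ≠ extChain a0 K (i + 1) :=
  Sum.inl_ne_inr

theorem extLt_inl_extChain {i : ℕ} (hi : i ≤ K + 2) (w : α) :
    extLt lt f a0 K (.inl w) (extChain a0 K i) ↔ w ∈ forcedBelow lt f a0 i := by
  cases i with
  | zero => rfl
  | succ i => simp [extChain, extLt, Nat.mod_eq_of_lt (by omega : i < K + 2)]

theorem extLt_extChain_inl {i : ℕ} (hi : i ≤ K + 2) (w : α) :
    extLt lt f a0 K (extChain a0 K i) (.inl w) ↔ w ∈ forcedAbove lt f a0 i := by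
  cases i with
  | zero => rfl
  | succ i => simp [extChain, extLt, Nat.mod_eq_of_lt (by omega : i < K + 2)]

theorem isStrictOrder_extLt [IsStrictOrder α lt] (hf : IsPAGraph lt f) (ho : f o a0)
    (hoa : lt o a0) : IsStrictOrder _ (extLt lt f a0 K) where
  irrefl := by
    rintro (x | i) h
    exacts [irrefl x h, lt_irrefl i h]
  trans := by
    have hS := forcedBelow_monotone ho hoa
    have hT := forcedAbove_antitone hf ho hoa
    rintro (x | i) (y | j) (z | l) hxy hyz
    · exact _root_.trans (r := lt) hxy hyz
    · exact forcedBelow_lower hxy hyz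
    · exact rel_of_mem_forcedBelow_of_mem_forcedAbove hf hxy hyz
    · exact hS (by simp only [extLt] at hyz; omega) hxy
    · exact forcedAbove_upper hyz hxy
    · show i < l
      by_contra! hli
      exact irrefl y (rel_of_mem_forcedBelow_of_mem_forcedAbove hf
        (hS (by simpa using hli) hyz) hxy)
    · exact hT (by simp only [extLt] at hxy; omega) hyz
    · exact lt_trans (α := Fin (K + 2)) hxy hyz

theorem isRelChain_extChain (ho : f o a0) (hoa : lt o a0) :
    IsRelChain (extLt lt f a0 K) (extChain a0 K) (K + 2) := by
  rintro (_ | i) hi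
  · exact (extLt_inl_extChain (by omega) a0).2 (mem_forcedBelow_succ ho hoa 0)
  · show Fin.ofNat (K + 2) i < Fin.ofNat (K + 2) (i + 1)
    rw [Fin.lt_def, Fin.val_ofNat, Fin.val_ofNat, Nat.mod_eq_of_lt (by omega),
      Nat.mod_eq_of_lt hi]
    omega

theorem isPAGraph_extGraph [IsStrictOrder α lt] (hf : IsPAGraph lt f) (ho : f o a0)
    (hoa : lt o a0) (hdom : ∀ y, ¬ f a0 y) : IsPAGraph (extLt lt f a0 K) (extGraph f a0 K) := by
  have := isStrictOrder_extLt (K := K) hf ho hoa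
  have hd := isRelChain_extChain (K := K) ho hoa
  refine (hf.map Sum.inl_injective fun _ _ => Iff.rfl).sup
    (IsRelChain.isPAGraph_chainGraph fun i hi => hd i (by omega)) ?_
  rintro _ _ _ _ ⟨u, v, huv, rfl, rfl⟩ ⟨i, hi, rfl, rfl⟩
  refine ⟨?_, inl_ne_extChain_succ v i, ?_, ?_⟩
  · cases i with
    | zero => exact fun h => hdom v (Sum.inl_injective h ▸ huv)
    | succ i => exact inl_ne_extChain_succ u i
  · rw [extLt_inl_extChain (by omega), extLt_inl_extChain (by omega), forcedBelow_succ_iff hf huv]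
  · rw [extLt_extChain_inl (by omega), extLt_extChain_inl (by omega), forcedAbove_succ_iff hf huv]

theorem isFreeGap_extend [IsStrictOrder α lt] (hf : IsPAGraph lt f) (ho : f o a0) (hoa : lt o a0)
    (hS : forcedBelow lt f a0 (K + 1) = forcedBelow lt f a0 (K + 2))
    (hT : forcedAbove lt f a0 (K + 1) = forcedAbove lt f a0 (K + 2)) :
    IsFreeGap (extLt lt f a0 K) (extGraph f a0 K) (extChain a0 K (K + 1))
      (extChain a0 K (K + 2)) := by
  have := isStrictOrder_extLt (K := K) hf ho hoa
  have hd := isRelChain_extChain (K := K) ho hoa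
  constructor
  · rintro y (⟨u, v, -, h, -⟩ | ⟨i, hi, h, -⟩)
    · exact inl_ne_extChain_succ u K h
    · exact absurd ((hd.eq_iff (by omega) (by omega)).1 h) (by omega)
  · rintro (w | j)
    · rw [extLt_inl_extChain le_rfl, extLt_inl_extChain (by omega), hS,
        or_iff_left (inl_ne_extChain_succ w K)]
    · rw [← extChain_val_succ j, hd.rel_iff (by omega) le_rfl, hd.rel_iff (by omega) (by omega),
        hd.eq_iff (by omega) (by omega)]
      omega
  · rintro (w | j)
    · rw [extLt_extChain_inl (by omega), extLt_extChain_inl le_rfl, hT,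
        or_iff_left (inl_ne_extChain_succ w (K + 1)).symm]
    · rw [← extChain_val_succ j, hd.rel_iff (by omega) (by omega), hd.rel_iff le_rfl (by omega),
        hd.eq_iff le_rfl (by omega)]
      omega
  · rintro _ _ (⟨u, v, huv, rfl, rfl⟩ | ⟨i, hi, rfl, rfl⟩)
    · rw [extLt_inl_extChain (by omega), extLt_inl_extChain le_rfl, forcedBelow_succ_iff hf huv]
    · rw [hd.rel_iff (by omega) (by omega), hd.rel_iff (by omega) le_rfl]
      omega
  · rintro _ _ (⟨u, v, huv, rfl, rfl⟩ | ⟨i, hi, rfl, rfl⟩)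
    · rw [extLt_extChain_inl (by omega), extLt_extChain_inl (by omega), hT,
        forcedAbove_succ_iff hf huv, hT]
    · rw [hd.rel_iff (by omega) (by omega), hd.rel_iff (by omega) (by omega)]
      omega

def PA.extend (A : PA) {a0 o : A.carrier} (ho : A.f o a0) (hoa : A.lt o a0)
    (hdom : ∀ y, ¬ A.f a0 y) (K : ℕ) : PA where
  carrier := A.carrier ⊕ Fin (K + 2)
  fin := inferInstance
  lt := extLt A.lt A.f a0 K
  irrefl := (isStrictOrder_extLt A.hf ho hoa).irrefl
  trans := (isStrictOrder_extLt A.hf ho hoa).trans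
  f := extGraph A.f a0 K
  hf := isPAGraph_extGraph A.hf ho hoa hdom

end Extension

/-- Lemma 1: if `(A,<_A,f_A)` is a partial automorphism of a finite poset and
`s <_A f_A(s)`, then there is an extension `(B,<_B,f_B)`, an `n ∈ ℕ`, and `a <_B b`
in `B` with `f_B^n(s) = a` and `f_B` free in `(a,b)`. -/
theorem exists_free_extension (A : PA) (s t : A.carrier)
    (hst : A.f s t) (hlt : A.lt s t) :
    ∃ (B : PA) (e : A.Emb B) (n : ℕ) (a b : B.carrier),
      B.lt a b ∧ iterGraph B.f n (e.toFun s) a ∧ FreeIn B a b := by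
  obtain ⟨n, a0, hsa0, ⟨o, ho, hoa⟩, hdom⟩ := exists_iterGraph_not_mem_dom A.hf hst hlt
  obtain ⟨K, hS, hT⟩ := exists_forced_stable A.hf ho hoa
  have := isStrictOrder_extLt (K := K) A.hf ho hoa
  have hinl : ∀ u v, A.f u v → extGraph A.f a0 K (.inl u) (.inl v) :=
    fun u v h => Or.inl ⟨u, v, h, rfl, rfl⟩
  have hchain : ∀ x y, chainGraph (extChain a0 K) (K + 1) x y → extGraph A.f a0 K x y :=
    fun _ _ => Or.inr
  refine ⟨A.extend ho hoa hdom K, ⟨Sum.inl, Sum.inl_injective, fun _ _ => Iff.rfl, hinl⟩,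
    n + (K + 1), extChain a0 K (K + 1), extChain a0 K (K + 2), ?_, ?_, ?_⟩
  · exact (isRelChain_extChain (K := K) ho hoa).rel (Nat.lt_succ_self _) le_rfl
  · exact iterGraph_add (iterGraph_map hinl hsa0)
      (iterGraph_map (e := id) hchain (iterGraph_chainGraph le_rfl))
  · exact (isFreeGap_extend A.hf ho hoa hS hT).freeIn
end

section
/- Let G be a Polish group acting continuously on a Polish space X. If the action has a dense orbit, then every orbit of the action is either meager or comeager in X. -/
/-!
If the orbit of `x` is not meagre, then for every nonempty open `V ⊆ G` the piece `V • x` is not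
meagre either, since countably many translates of it cover the orbit. Translating a point of
`V • x` lying in the interior of its closure back to `g • x` shows that the orbit map `g ↦ g • x`
is nearly open: `N • x` is contained in the interior of its closure for open `N`. For a nearly
open continuous map out of a Polish space, a Baire category argument with nested basic open
sets of shrinking radius shows that the range is comeagre in the interior of its closure. That
open set is `G`-invariant and contains `x`, so it contains the dense orbit of `x₀`; hence it is
dense and the orbit of `x` is comeagre.
-/

open Set Filter Topology Metric TopologicalSpace MulAction Pointwise

theorem exists_seq_of_forall_exists_step {α : Type*} {p : α → Prop} {r : ℕ → α → α → Prop}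
    {a : α} (ha : p a) (h : ∀ n a, p a → ∃ b, p b ∧ r n a b) :
    ∃ s : ℕ → α, s 0 = a ∧ ∀ n, p (s n) ∧ r n (s n) (s (n + 1)) := by
  choose! next hnext using h
  let s : ℕ → α := fun n => Nat.rec a next n
  have hs : ∀ n, p (s n) := fun n => Nat.rec ha (fun n ih => (hnext n _ ih).1) n
  exact ⟨s, rfl, fun n => ⟨hs n, (hnext n _ (hs n)).2⟩⟩

section Topology

variable {X Y : Type*} [TopologicalSpace X]

theorem nonempty_interior_closure_inter_of_not_isMeagre {s : Set X} (hs : ¬IsMeagre s) :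
    (interior (closure s) ∩ s).Nonempty := by
  obtain ⟨z, hz⟩ : (interior (closure s)).Nonempty :=
    nonempty_iff_ne_empty.2 fun h => hs (IsNowhereDense.isMeagre h)
  exact mem_closure_iff.1 (interior_subset hz) _ isOpen_interior hz

theorem IsOpen.isNowhereDense_diff {s O : Set X} (hO : IsOpen O) (hs : s ⊆ closure O) :
    IsNowhereDense (s \ O) := by
  have hfr : IsNowhereDense (frontier O) := by
    rw [isClosed_frontier.isNowhereDense_iff, ← frontier_compl]
    exact interior_frontier hO.isClosed_compl
  exact hfr.mono (hO.frontier_eq ▸ sdiff_subset_sdiff_left hs)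

variable {f : Y → X}

theorem mem_range_of_cauchy_of_clusterPt [UniformSpace Y] [CompleteSpace Y] [T2Space X]
    (hf : Continuous f) {F : Filter Y} (hF : Cauchy F) {y : X} (hy : ClusterPt y (map f F)) :
    y ∈ range f := by
  obtain ⟨z, hz⟩ := CompleteSpace.complete hF
  exact ⟨z, (eq_of_nhds_neBot (hy.mono ((map_mono hz).trans (hf.tendsto z)))).symm⟩

theorem cauchy_iInf_principal [PseudoMetricSpace Y] {S : ℕ → Set Y} (hS : Antitone S)
    (hne : ∀ n, (S n).Nonempty) (hsmall : ∀ ε > 0, ∃ n c, S n ⊆ ball c ε) :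
    Cauchy (⨅ n, 𝓟 (S n)) := by
  have hb := HasAntitoneBasis.iInf_principal hS
  refine Metric.cauchy_iff.2 ⟨hb.1.neBot_iff.2 fun _ => hne _, fun ε hε => ?_⟩
  obtain ⟨n, c, hn⟩ := hsmall (ε / 2) (half_pos hε)
  refine ⟨S n, hb.mem n, fun a ha b hb => ?_⟩
  calc dist a b ≤ dist a c + dist b c := dist_triangle_right a b c
    _ < ε / 2 + ε / 2 := add_lt_add (hn ha) (hn hb)
    _ = ε := add_halves ε

theorem mem_range_of_forall_mem_closure_image [PseudoMetricSpace Y] [CompleteSpace Y]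
    [T2Space X] (hf : Continuous f) {S : ℕ → Set Y} (hS : Antitone S)
    (hsmall : ∀ ε > 0, ∃ n c, S n ⊆ ball c ε) {y : X} (hy : ∀ n, y ∈ closure (f '' S n)) :
    y ∈ range f := by
  refine mem_range_of_cauchy_of_clusterPt hf
    (cauchy_iInf_principal hS (fun n => ?_) hsmall) ?_
  · exact (closure_nonempty_iff.1 ⟨y, hy n⟩).of_image
  · exact ((HasAntitoneBasis.iInf_principal hS).map f).1.clusterPt_iff_forall_mem_closure.2
      fun n _ => hy n

theorem interior_closure_image_subset_closure_biUnion [TopologicalSpace Y]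
    (hnear : ∀ N, IsOpen N → f '' N ⊆ interior (closure (f '' N))) {𝓡 : Set (Set Y)}
    (h𝓡 : ∀ B ∈ 𝓡, IsOpen B) {B : Set Y} (hB : B ⊆ ⋃₀ 𝓡) :
    interior (closure (f '' B)) ⊆ closure (⋃ B' ∈ 𝓡, interior (closure (f '' B'))) := by
  refine interior_subset.trans (closure_mono ?_)
  rintro _ ⟨w, hw, rfl⟩
  obtain ⟨B', hB', hwB'⟩ := hB hw
  exact mem_biUnion hB' (hnear B' (h𝓡 B' hB') (mem_image_of_mem f hwB'))

theorem isMeagre_interior_closure_range_diff [TopologicalSpace Y] [PolishSpace Y] [T2Space X]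
    (hf : Continuous f) (hnear : ∀ N, IsOpen N → f '' N ⊆ interior (closure (f '' N))) :
    IsMeagre (interior (closure (range f)) \ range f) := by
  let := upgradeIsCompletelyMetrizable Y
  obtain ⟨𝓑, h𝓑c, -, h𝓑⟩ := exists_countable_basis Y
  set P : Set Y → Set X := fun B => interior (closure (f '' B))
  set 𝓡 : ℕ → Set Y → Set (Set Y) :=
    fun n B => {B' ∈ 𝓑 | B' ⊆ B ∧ ∃ c, B' ⊆ ball c (1 / (n + 1))}
  have h𝓡 : ∀ n B, IsOpen B → B ⊆ ⋃₀ 𝓡 n B := by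
    intro n B hB w hw
    obtain ⟨B', hB', hwB', hB'B⟩ := h𝓑.exists_subset_of_mem_open (mem_inter hw
      (mem_ball_self (by positivity : (0 : ℝ) < 1 / (n + 1)))) (hB.inter isOpen_ball)
    exact ⟨B', ⟨hB', hB'B.trans inter_subset_left, w, hB'B.trans inter_subset_right⟩, hwB'⟩
  set M := ⋃ B ∈ insert univ 𝓑, ⋃ n : ℕ, P B \ ⋃ B' ∈ 𝓡 n B, P B'
  have hM : IsMeagre M := by
    refine isMeagre_biUnion (h𝓑c.insert univ) fun B hB => isMeagre_iUnion fun n => ?_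
    have hBo : IsOpen B := hB.elim (· ▸ isOpen_univ) h𝓑.isOpen
    refine (IsOpen.isNowhereDense_diff (isOpen_biUnion fun _ _ => isOpen_interior) ?_).isMeagre
    exact interior_closure_image_subset_closure_biUnion hnear
      (fun B' hB' => h𝓑.isOpen hB'.1) (h𝓡 n B hBo)
  -- Outside `M`, every `P B` containing `y` is refined by a smaller basic `P B'` containing `y`.
  refine hM.mono fun y ⟨hyU, hyf⟩ => by_contra fun hyM => hyf ?_
  have hstep : ∀ n B, B ∈ insert univ 𝓑 ∧ y ∈ P B →
      ∃ B', (B' ∈ insert univ 𝓑 ∧ y ∈ P B') ∧ B' ∈ 𝓡 n B := by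
    rintro n B ⟨hB, hyB⟩
    have : y ∈ ⋃ B' ∈ 𝓡 n B, P B' :=
      by_contra fun h => hyM (mem_biUnion hB (mem_iUnion_of_mem n ⟨hyB, h⟩))
    obtain ⟨B', hB', hyB'⟩ := mem_iUnion₂.1 this
    exact ⟨B', ⟨mem_insert_of_mem _ hB'.1, hyB'⟩, hB'⟩
  obtain ⟨S, -, hS⟩ :=
    exists_seq_of_forall_exists_step ⟨mem_insert univ 𝓑, by simpa [P] using hyU⟩ hstep
  refine mem_range_of_forall_mem_closure_image hf (antitone_nat_of_succ_le fun n => (hS n).2.2.1)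
    (fun ε hε => ?_) fun n => interior_subset (hS n).1.2
  obtain ⟨n, hn⟩ := exists_nat_one_div_lt hε
  obtain ⟨c, hc⟩ := (hS n).2.2.2
  exact ⟨n + 1, c, hc.trans (ball_subset_ball hn.le)⟩

end Topology

section Action

variable {G X : Type*} [Group G] [TopologicalSpace X] [MulAction G X]

theorem dense_of_isOpen_of_forall_smul_mem {x₀ : X} (hx₀ : Dense (orbit G x₀)) {U : Set X}
    (hU : IsOpen U) (hne : U.Nonempty) (hinv : ∀ g : G, ∀ y ∈ U, g • y ∈ U) : Dense U := by
  obtain ⟨_, ⟨h, rfl⟩, hh⟩ := hx₀.exists_mem_open hU hne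
  refine hx₀.mono ?_
  rintro _ ⟨g, rfl⟩
  simpa [smul_smul] using hinv (g * h⁻¹) _ hh

variable [ContinuousConstSMul G X]

theorem smul_mem_interior_closure_orbit (g : G) {x y : X}
    (hy : y ∈ interior (closure (orbit G x))) : g • y ∈ interior (closure (orbit G x)) := by
  have := smul_mem_smul_set (a := g) hy
  rwa [← interior_smul, ← closure_smul, smul_orbit] at this

variable [TopologicalSpace G]

theorem isMeagre_orbit_of_isMeagre_image [ContinuousMul G] [SeparableSpace G] {x : X}
    {V : Set G} (hV : IsOpen V) (hVne : V.Nonempty) (hm : IsMeagre ((· • x) '' V)) :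
    IsMeagre (orbit G x) := by
  obtain ⟨D, hDc, hD⟩ := exists_countable_dense G
  refine (isMeagre_biUnion hDc fun d _ =>
    hm.preimage_of_isOpenMap (continuous_const_smul d) (isOpenMap_smul d)).mono ?_
  rintro _ ⟨g, rfl⟩
  obtain ⟨v, hv⟩ := hVne
  obtain ⟨d, hdD, hdg⟩ := hD.exists_mem_open (hV.preimage (continuous_mul_const g))
    ⟨v * g⁻¹, by simpa using hv⟩
  exact mem_biUnion hdD ⟨d * g, hdg, mul_smul d g x⟩

theorem smul_mem_interior_closure_image [IsTopologicalGroup G] [SeparableSpace G] {x : X}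
    (hx : ¬IsMeagre (orbit G x)) {N : Set G} (hN : IsOpen N) {g : G} (hg : g ∈ N) :
    g • x ∈ interior (closure ((· • x) '' N)) := by
  have hs : (g * ·) ⁻¹' N ∈ 𝓝 (1 : G) :=
    (continuous_const_mul g).continuousAt.preimage_mem_nhds (by simpa using hN.mem_nhds hg)
  obtain ⟨V, hV, hVN⟩ := exists_nhds_split_inv hs
  set W := (interior V)⁻¹
  have hW : IsOpen W := isOpen_interior.inv
  have hWne : W.Nonempty := ⟨1, by simpa [W] using mem_interior_iff_mem_nhds.2 hV⟩
  obtain ⟨_, hint, a, ha, rfl⟩ := nonempty_interior_closure_inter_of_not_isMeagre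
    fun hm => hx (isMeagre_orbit_of_isMeagre_image hW hWne hm)
  have htrans : (g * a⁻¹) • (· • x) '' W ⊆ (· • x) '' N := by
    rintro _ ⟨_, ⟨b, hb, rfl⟩, rfl⟩
    refine ⟨g * a⁻¹ * b, ?_, by simp [mul_smul]⟩
    simpa [mul_assoc] using hVN _ (interior_subset ha) _ (interior_subset hb)
  have := smul_mem_smul_set (a := g * a⁻¹) hint
  rw [← interior_smul, ← closure_smul, smul_smul, inv_mul_cancel_right] at this
  exact interior_mono (closure_mono htrans) this

end Action

/-- If a Polish group `G` acts continuously on a Polish space `X` and the action has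
a dense orbit, then every orbit is either meager or comeager in `X`. -/
theorem orbit_meager_or_comeager (G : Type) [Group G] [TopologicalSpace G]
    [IsTopologicalGroup G] [PolishSpace G]
    (X : Type) [TopologicalSpace X] [PolishSpace X]
    [MulAction G X] [ContinuousSMul G X]
    (x₀ : X) (hdense : Dense (MulAction.orbit G x₀)) :
    ∀ x : X, IsMeagre (MulAction.orbit G x) ∨ MulAction.orbit G x ∈ residual X := by
  intro x
  refine or_iff_not_imp_left.2 fun hx => ?_
  have hnear : ∀ N : Set G, IsOpen N → (· • x) '' N ⊆ interior (closure ((· • x) '' N)) := by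
    rintro N hN _ ⟨g, hg, rfl⟩
    exact smul_mem_interior_closure_image hx hN hg
  have hgap := isMeagre_interior_closure_range_diff (continuous_id.smul continuous_const) hnear
  have hxU : x ∈ interior (closure (orbit G x)) := by
    have := hnear univ isOpen_univ ⟨1, trivial, one_smul G x⟩
    rwa [image_univ] at this
  have hU : Dense (interior (closure (orbit G x))) :=
    dense_of_isOpen_of_forall_smul_mem hdense isOpen_interior ⟨x, hxU⟩
      fun g _ hy => smul_mem_interior_closure_orbit g hy
  filter_upwards [residual_of_dense_open isOpen_interior hU, hgap] with y hyU hy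
  exact not_not.1 fun h => hy ⟨hyU, h⟩
end

section
/- Let (P,<) be a countable partial order such that (1) every finite partial order embeds into (P,<), and (2) for any two embeddings f, g of a finite partial order into (P,<) there is an automorphism φ of (P,<) with φ∘f = g. Then the diagonal conjugation action of Aut(P,<) on Aut(P,<)², given by g·(f₁,f₂) = (g f₁ g⁻¹, g f₂ g⁻¹), has a dense orbit. -/
/-- An embedding of posets: an injective map `e` with `a < a' ↔ e a < e a'`. -/
def PosetEmb {A P : Type} [PartialOrder A] [PartialOrder P] (e : A → P) : Prop :=
  Function.Injective e ∧ ∀ a a' : A, a < a' ↔ e a < e a'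

/-- The topology of pointwise convergence on the automorphism group of a poset `P`:
the topology induced from the product topology on `P → P`, where `P` is discrete. -/
def autTop (P : Type) [PartialOrder P] : TopologicalSpace (P ≃o P) :=
  letI : TopologicalSpace P := ⊥
  TopologicalSpace.induced (fun f => (f : P → P)) Pi.topologicalSpace

/-!
Build `f₁, f₂` by a Rasiowa–Sikorski (back-and-forth) construction whose conditions are pairs
of finite partial isomorphisms of `P`. Besides the conditions making the limit maps total and
surjective, the sequence meets, for every pair `(s₁, s₂)` of finite partial isomorphisms, a
condition containing a simultaneous conjugate `(θ s₁ θ⁻¹, θ s₂ θ⁻¹)`: universality provides a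
copy of the pattern incomparable with everything built so far, and homogeneity turns that copy
into such a conjugate. A basic neighbourhood of `(k₁, k₂)` prescribes `k₁, k₂` on a finite set
`I`; the restrictions of `k₁, k₂` to `I` form such a pair, so the neighbourhood meets the orbit.
-/

open Set

def FinitelyUniversal (P : Type) [PartialOrder P] : Prop :=
  ∀ (A : Type) [Fintype A] [PartialOrder A], ∃ e : A → P, PosetEmb e

def Ultrahomogeneous (P : Type) [PartialOrder P] : Prop :=
  ∀ (A : Type) [Fintype A] [PartialOrder A] (f g : A → P),
    PosetEmb f → PosetEmb g → ∃ φ : P ≃o P, ∀ a : A, φ (f a) = g a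

/-- By antisymmetry, such an `s` is the graph of an order isomorphism between a subset of `α`
and a subset of `β`. -/
def IsPartialIso {α β : Type} [PartialOrder α] [PartialOrder β] (s : Set (α × β)) : Prop :=
  ∀ p ∈ s, ∀ q ∈ s, p.1 ≤ q.1 ↔ p.2 ≤ q.2

section PartialIso

variable {α β : Type} [PartialOrder α] [PartialOrder β] {s t : Set (α × β)}

theorem IsPartialIso.fst_eq_iff (hs : IsPartialIso s) {p q : α × β} (hp : p ∈ s) (hq : q ∈ s) :
    p.1 = q.1 ↔ p.2 = q.2 := by
  rw [le_antisymm_iff, le_antisymm_iff, hs p hp q hq, hs q hq p hp]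

theorem isPartialIso_of_forall_apply_eq (φ : α ≃o β) (h : ∀ p ∈ s, φ p.1 = p.2) :
    IsPartialIso s := by
  intro p hp q hq
  rw [← h p hp, ← h q hq, φ.le_iff_le]

theorem IsPartialIso.image_prodMap (hs : IsPartialIso s) (φ : α ≃o α) (ψ : β ≃o β) :
    IsPartialIso (Prod.map φ ψ '' s) := by
  rintro _ ⟨p, hp, rfl⟩ _ ⟨q, hq, rfl⟩
  simpa using hs p hp q hq

theorem IsPartialIso.union (hs : IsPartialIso s) (ht : IsPartialIso t)
    (hst : ∀ p ∈ s, ∀ q ∈ t, IncompRel (· ≤ ·) p.1 q.1 ∧ IncompRel (· ≤ ·) p.2 q.2) :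
    IsPartialIso (s ∪ t) := by
  rintro p (hp | hp) q (hq | hq)
  · exact hs p hp q hq
  · exact iff_of_false (hst p hp q hq).1.1 (hst p hp q hq).2.1
  · exact iff_of_false (hst q hq p hp).1.2 (hst q hq p hp).2.2
  · exact ht p hp q hq

theorem isPartialIso_iUnion {ι : Type} {s : ι → Set (α × β)} (hdir : Directed (· ⊆ ·) s)
    (hs : ∀ i, IsPartialIso (s i)) : IsPartialIso (⋃ i, s i) := by
  intro p hp q hq
  obtain ⟨i, hpi⟩ := mem_iUnion.1 hp
  obtain ⟨j, hqj⟩ := mem_iUnion.1 hq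
  obtain ⟨k, hik, hjk⟩ := hdir i j
  exact hs k p (hik hpi) q (hjk hqj)

theorem IsPartialIso.exists_orderIso (hs : IsPartialIso s) (hdom : ∀ a, ∃ b, (a, b) ∈ s)
    (hran : ∀ b, ∃ a, (a, b) ∈ s) : ∃ φ : α ≃o β, ∀ p ∈ s, φ p.1 = p.2 := by
  choose f hf using hdom
  choose g hg using hran
  have hf_eq : ∀ p ∈ s, f p.1 = p.2 := fun p hp => (hs.fst_eq_iff (hf p.1) hp).1 rfl
  refine ⟨⟨⟨f, g, fun a => ?_, fun b => hf_eq _ (hg b)⟩, fun {a a'} => ?_⟩, hf_eq⟩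
  · exact (hs.fst_eq_iff (hg (f a)) (hf a)).2 rfl
  · exact (hs (a, f a) (hf a) (a', f a') (hf a')).symm

end PartialIso

section Homogeneity

variable {A P : Type} [PartialOrder A] [PartialOrder P]

theorem PosetEmb.le_iff_le {e : A → P} (he : PosetEmb e) (a a' : A) : e a ≤ e a' ↔ a ≤ a' := by
  rw [le_iff_lt_or_eq, le_iff_lt_or_eq, he.2, he.1.eq_iff]

theorem FinitelyUniversal.nonempty_orderEmbedding (hP : FinitelyUniversal P) (A : Type)
    [Fintype A] [PartialOrder A] : Nonempty (A ↪o P) :=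
  let ⟨e, he⟩ := hP A
  ⟨OrderEmbedding.ofMapLEIff e he.le_iff_le⟩

theorem Ultrahomogeneous.exists_orderIso_comp_eq (hP : Ultrahomogeneous P) [Fintype A]
    (f g : A ↪o P) : ∃ φ : P ≃o P, ∀ a, φ (f a) = g a :=
  hP A f g ⟨f.injective, fun _ _ => f.lt_iff_lt.symm⟩ ⟨g.injective, fun _ _ => g.lt_iff_lt.symm⟩

theorem Ultrahomogeneous.exists_orderIso_of_isPartialIso (hP : Ultrahomogeneous P)
    {s : Finset (P × P)} (hs : IsPartialIso (s : Set (P × P))) :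
    ∃ φ : P ≃o P, ∀ p ∈ s, φ p.1 = p.2 := by
  have hinj : Function.Injective fun p : s => p.1.1 := fun p q h =>
    Subtype.ext (Prod.ext h ((hs.fst_eq_iff p.2 q.2).1 h))
  -- `s` is ordered by first coordinates; its two projections are then order embeddings.
  let : PartialOrder s := PartialOrder.lift _ hinj
  obtain ⟨φ, hφ⟩ := hP.exists_orderIso_comp_eq
    (OrderEmbedding.ofMapLEIff (fun p : s => p.1.1) fun _ _ => Iff.rfl)
    (OrderEmbedding.ofMapLEIff (fun p : s => p.1.2) fun p q => (hs _ p.2 _ q.2).symm)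
  exact ⟨φ, fun p hp => hφ ⟨p, hp⟩⟩

theorem Ultrahomogeneous.exists_isPartialIso_superset (hP : Ultrahomogeneous P)
    {s : Finset (P × P)} (hs : IsPartialIso (s : Set (P × P))) (x : P) :
    ∃ t : Finset (P × P), IsPartialIso (t : Set (P × P)) ∧ s ⊆ t ∧
      (∃ y, (x, y) ∈ t) ∧ ∃ z, (z, x) ∈ t := by
  classical
  obtain ⟨φ, hφ⟩ := hP.exists_orderIso_of_isPartialIso hs
  refine ⟨insert (x, φ x) (insert (φ.symm x, x) s), isPartialIso_of_forall_apply_eq φ ?_,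
    fun p hp => by simp [hp], ⟨φ x, by simp⟩, ⟨φ.symm x, by simp⟩⟩
  simp only [Finset.coe_insert, mem_insert_iff, forall_eq_or_imp, OrderIso.apply_symm_apply,
    true_and]
  exact hφ

/-- Embed the disjoint sum `D ⊕ B` and use homogeneity to move its `D`-part back onto `D`. -/
theorem exists_orderIso_incompRel (hU : FinitelyUniversal P) (hH : Ultrahomogeneous P)
    (B D : Finset P) : ∃ θ : P ≃o P, ∀ b ∈ B, ∀ d ∈ D, IncompRel (· ≤ ·) (θ b) d := by
  obtain ⟨E⟩ := hU.nonempty_orderEmbedding (D ⊕ B)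
  obtain ⟨φ, hφ⟩ := hH.exists_orderIso_comp_eq
    (OrderEmbedding.ofMapLEIff (fun d : D => E (.inl d)) fun _ _ => by simp)
    (OrderEmbedding.subtype (· ∈ D))
  obtain ⟨θ, hθ⟩ := hH.exists_orderIso_comp_eq (OrderEmbedding.subtype (· ∈ B))
    ((OrderEmbedding.ofMapLEIff (fun b : B => E (.inr b)) fun _ _ => by simp).trans
      φ.toOrderEmbedding)
  refine ⟨θ, fun b hb d hd => ?_⟩
  have hθb : θ b = φ (E (.inr ⟨b, hb⟩)) := hθ ⟨b, hb⟩
  have hφd : φ (E (.inl ⟨d, hd⟩)) = d := hφ ⟨d, hd⟩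
  rw [hθb, ← hφd, IncompRel, φ.le_iff_le, φ.le_iff_le, E.le_iff_le, E.le_iff_le]
  exact ⟨Sum.not_inr_le_inl, Sum.not_inl_le_inr⟩

end Homogeneity

section Construction

variable {ι P : Type} [PartialOrder P]

abbrev PartialIsoFamily (ι P : Type) [PartialOrder P] : Type :=
  {q : ι → Finset (P × P) // ∀ i, IsPartialIso (q i : Set (P × P))}

theorem isCofinal_mem_dom_ran (hH : Ultrahomogeneous P) (x : P) :
    IsCofinal {q : PartialIsoFamily ι P | ∀ i, (∃ y, (x, y) ∈ q.1 i) ∧ ∃ z, (z, x) ∈ q.1 i} := by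
  intro q
  choose t ht hqt hx using fun i => hH.exists_isPartialIso_superset (q.2 i) x
  exact ⟨⟨t, ht⟩, hx, hqt⟩

theorem isCofinal_conj_subset [Fintype ι] (hU : FinitelyUniversal P) (hH : Ultrahomogeneous P)
    (s : PartialIsoFamily ι P) :
    IsCofinal {q : PartialIsoFamily ι P |
      ∃ θ : P ≃o P, ∀ i, ∀ p ∈ s.1 i, (θ p.1, θ p.2) ∈ q.1 i} := by
  classical
  intro q
  let support (r : ι → Finset (P × P)) : Finset P :=
    Finset.univ.biUnion fun i => (r i).image Prod.fst ∪ (r i).image Prod.snd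
  have mem_support {r : ι → Finset (P × P)} {i : ι} {p : P × P} (hp : p ∈ r i) :
      p.1 ∈ support r ∧ p.2 ∈ support r := by
    simp only [support, Finset.mem_biUnion, Finset.mem_union, Finset.mem_image]
    exact ⟨⟨i, Finset.mem_univ _, .inl ⟨p, hp, rfl⟩⟩, ⟨i, Finset.mem_univ _, .inr ⟨p, hp, rfl⟩⟩⟩
  obtain ⟨θ, hθ⟩ := exists_orderIso_incompRel hU hH (support s.1) (support q.1)
  refine ⟨⟨fun i => q.1 i ∪ (s.1 i).image (Prod.map θ θ), fun i => ?_⟩,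
    ⟨θ, fun i p hp => Finset.mem_union_right _ (Finset.mem_image_of_mem _ hp)⟩,
    fun i => Finset.subset_union_left⟩
  rw [Finset.coe_union, Finset.coe_image]
  refine (q.2 i).union ((s.2 i).image_prodMap θ θ) ?_
  rintro p hp _ ⟨r, hr, rfl⟩
  exact ⟨incompRel_comm.1 (hθ _ (mem_support hr).1 _ (mem_support hp).1),
    incompRel_comm.1 (hθ _ (mem_support hr).2 _ (mem_support hp).2)⟩

theorem exists_generic_family [Fintype ι] [Countable P] (hU : FinitelyUniversal P)
    (hH : Ultrahomogeneous P) :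
    ∃ f : ι → P ≃o P, ∀ s : PartialIsoFamily ι P,
      ∃ θ : P ≃o P, ∀ i, ∀ p ∈ s.1 i, f i (θ p.1) = θ p.2 := by
  let : Encodable (P ⊕ PartialIsoFamily ι P) := Encodable.ofCountable _
  let 𝒟 : P ⊕ PartialIsoFamily ι P → Order.Cofinal (PartialIsoFamily ι P) :=
    Sum.elim (fun x => ⟨_, isCofinal_mem_dom_ran hH x⟩) fun s => ⟨_, isCofinal_conj_subset hU hH s⟩
  let q := Order.sequenceOfCofinals ⟨fun _ => ∅, fun _ _ h => absurd h (Finset.notMem_empty _)⟩ 𝒟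
  have hq : Monotone q := Order.sequenceOfCofinals.monotone _ _
  have hq_mem (t) : q (Encodable.encode t + 1) ∈ 𝒟 t := Order.sequenceOfCofinals.encode_mem _ _ t
  let S (i : ι) : Set (P × P) := ⋃ n, ((q n).1 i : Set (P × P))
  have hS_sub (i n) : ((q n).1 i : Set (P × P)) ⊆ S i := subset_iUnion (fun n => ((q n).1 i : Set (P × P))) n
  have hS (i) : IsPartialIso (S i) :=
    isPartialIso_iUnion (Monotone.directed_le fun m n hmn => Finset.coe_subset.2 (hq hmn i))
      fun n => (q n).2 i
  choose f hf using fun i => (hS i).exists_orderIso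
    (fun x => let ⟨y, hy⟩ := (hq_mem (.inl x) i).1; ⟨y, hS_sub i _ hy⟩)
    (fun x => let ⟨z, hz⟩ := (hq_mem (.inl x) i).2; ⟨z, hS_sub i _ hz⟩)
  refine ⟨f, fun s => ?_⟩
  obtain ⟨θ, hθ⟩ := hq_mem (.inr s)
  exact ⟨θ, fun i p hp => hf i _ (hS_sub i _ (hθ i p hp))⟩

theorem exists_family_conj_eqOn [Fintype ι] [Countable P] (hU : FinitelyUniversal P)
    (hH : Ultrahomogeneous P) :
    ∃ f : ι → P ≃o P, ∀ (k : ι → P ≃o P) (I : Set P), I.Finite →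
      ∃ g : P ≃o P, ∀ i, ∀ x ∈ I, (g * f i * g⁻¹) x = k i x := by
  classical
  obtain ⟨f, hf⟩ := exists_generic_family (ι := ι) hU hH
  refine ⟨f, fun k I hI => ?_⟩
  let s : PartialIsoFamily ι P := ⟨fun i => hI.toFinset.image fun x => (x, k i x), fun i =>
    isPartialIso_of_forall_apply_eq (k i) (by simp)⟩
  obtain ⟨θ, hθ⟩ := hf s
  refine ⟨θ⁻¹, fun i x hx => ?_⟩
  have := hθ i (x, k i x) (Finset.mem_image_of_mem _ (hI.mem_toFinset.2 hx))
  simp only [RelIso.mul_apply, inv_inv, this, RelIso.inv_apply_self]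

end Construction

theorem autTop_nhds_hasBasis {P : Type} [PartialOrder P] (k : P ≃o P) :
    (@nhds _ (autTop P) k).HasBasis Set.Finite fun I => {k' : P ≃o P | ∀ x ∈ I, k' x = k x} := by
  let _ : TopologicalSpace P := ⊥
  have : DiscreteTopology P := ⟨rfl⟩
  rw [autTop, nhds_induced, nhds_pi, nhds_discrete]
  exact (Filter.hasBasis_pi_pure _).comap _

/-- The diagonal conjugation action of `Aut(P)` on `Aut(P)²` has a dense orbit,
where `P` is the random poset. -/
theorem diagonal_conjugation_dense_orbit (P : Type) [PartialOrder P] [Countable P]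
    (h1 : ∀ (A : Type) [Fintype A] [PartialOrder A], ∃ e : A → P, PosetEmb e)
    (h2 : ∀ (A : Type) [Fintype A] [PartialOrder A] (f g : A → P),
      PosetEmb f → PosetEmb g → ∃ φ : P ≃o P, ∀ a : A, φ (f a) = g a) :
    letI : TopologicalSpace (P ≃o P) := autTop P
    ∃ f₁ f₂ : P ≃o P,
      Dense {p : (P ≃o P) × (P ≃o P) |
        ∃ g : P ≃o P, p = (g * f₁ * g⁻¹, g * f₂ * g⁻¹)} := by
  let _ : TopologicalSpace (P ≃o P) := autTop P
  obtain ⟨f, hf⟩ := exists_family_conj_eqOn (ι := Bool) h1 h2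
  refine ⟨f true, f false, fun k => ?_⟩
  rw [mem_closure_iff_nhds_basis ((autTop_nhds_hasBasis k.1).prod_nhds (autTop_nhds_hasBasis k.2))]
  rintro ⟨I₁, I₂⟩ ⟨hI₁, hI₂⟩
  obtain ⟨g, hg⟩ := hf (fun i => cond i k.1 k.2) (I₁ ∪ I₂) (hI₁.union hI₂)
  exact ⟨_, ⟨g, rfl⟩, fun x hx => hg true x (.inl hx), fun x hx => hg false x (.inr hx)⟩
end
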